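/- Let n ≥ 1 and work in the polynomial ring ℚ[x₁,…,x_{2n}, y₁,…,y_{2n}]. Then the polynomial P_n = x₁x₂⋯x_n · y_{n+1}y_{n+2}⋯y_{2n} + y₁y₂⋯y_n · x_{n+1}x_{n+2}⋯x_{2n} lies in the subring (with integer coefficients) generated by the elements τ_{i,j} = −(x_i−x_j)(y_i−y_j)/2 for 1 ≤ i < j ≤ 2n together with the elements τ_{i,2n+1} = −x_i y_i/2 for 1 ≤ i ≤ 2n. -/
import Mathlib


open MvPolynomial Finset

/-- The variable `xᵢ` in the polynomial ring `ℚ[x₁,…, y₁,…]`, indexed from `0`. -/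
noncomputable def xVar (i : ℕ) : MvPolynomial (ℕ ⊕ ℕ) ℚ := X (Sum.inl i)

/-- The variable `yᵢ` in the polynomial ring `ℚ[x₁,…, y₁,…]`, indexed from `0`. -/
noncomputable def yVar (i : ℕ) : MvPolynomial (ℕ ⊕ ℕ) ℚ := X (Sum.inr i)

noncomputable def tau1 (i j : ℕ) : MvPolynomial (ℕ ⊕ ℕ) ℚ :=
  C (-(1 / 2) : ℚ) * ((xVar i - xVar j) * (yVar i - yVar j))

noncomputable def tau2 (i : ℕ) : MvPolynomial (ℕ ⊕ ℕ) ℚ :=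
  C (-(1 / 2) : ℚ) * (xVar i * yVar i)

/-- `sh i j = (xᵢyⱼ + xⱼyᵢ)/2`, an element of the subring. -/
noncomputable def sh (i j : ℕ) : MvPolynomial (ℕ ⊕ ℕ) ℚ :=
  tau1 i j - tau2 i - tau2 j

noncomputable def dd (i j : ℕ) : MvPolynomial (ℕ ⊕ ℕ) ℚ :=
  xVar i * yVar j - xVar j * yVar i

def gens (n : ℕ) : Set (MvPolynomial (ℕ ⊕ ℕ) ℚ) :=
  ({p : MvPolynomial (ℕ ⊕ ℕ) ℚ | ∃ i j : ℕ, i < j ∧ j < 2 * n ∧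
      p = C (-(1 / 2) : ℚ) * ((xVar i - xVar j) * (yVar i - yVar j))} ∪
   {p : MvPolynomial (ℕ ⊕ ℕ) ℚ | ∃ i : ℕ, i < 2 * n ∧
      p = C (-(1 / 2) : ℚ) * (xVar i * yVar i)})

lemma hC : (C (-(1 / 2) : ℚ) : MvPolynomial (ℕ ⊕ ℕ) ℚ) * 2 = -1 := by
  rw [show (2 : MvPolynomial (ℕ ⊕ ℕ) ℚ) = C (2 : ℚ) from (map_ofNat _ 2).symm, ← C_mul]
  norm_num

lemma hp (i j : ℕ) : (2 : MvPolynomial (ℕ ⊕ ℕ) ℚ) * sh i j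
    = xVar i * yVar j + xVar j * yVar i := by
  unfold sh tau1 tau2
  linear_combination (-(xVar i * yVar j + xVar j * yVar i)) * hC

lemma sh_symm (i j : ℕ) : sh i j = sh j i := by
  unfold sh tau1 tau2; ring

lemma sh_mem (n : ℕ) {i j : ℕ} (hij : i ≠ j) (hi : i < 2 * n) (hj : j < 2 * n) :
    sh i j ∈ Subring.closure (gens n) := by
  have key : ∀ a b : ℕ, a < b → b < 2 * n → sh a b ∈ Subring.closure (gens n) := by
    intro a b hab hb
    have h1 : tau1 a b ∈ Subring.closure (gens n) :=
      Subring.subset_closure (Or.inl ⟨a, b, hab, hb, rfl⟩)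
    have h2 : tau2 a ∈ Subring.closure (gens n) :=
      Subring.subset_closure (Or.inr ⟨a, lt_trans hab hb, rfl⟩)
    have h3 : tau2 b ∈ Subring.closure (gens n) :=
      Subring.subset_closure (Or.inr ⟨b, hb, rfl⟩)
    exact sub_mem (sub_mem h1 h2) h3
  rcases lt_or_gt_of_ne hij with h | h
  · exact key i j h hj
  · rw [sh_symm]; exact key j i h hi

/-- products of two `dd`'s are (4 times) polynomials in the `sh`'s -/
lemma dd_mul (a b c e : ℕ) : dd a b * dd c e
    = 2 * (2 * (sh a e * sh b c - sh a c * sh b e)) := by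
  unfold dd sh tau1 tau2
  linear_combination (((xVar a * yVar b - xVar b * yVar a) *
      (xVar c * yVar e - xVar e * yVar c)) * (1 - 2 * (C (-(1 / 2) : ℚ)
      : MvPolynomial (ℕ ⊕ ℕ) ℚ))) * hC

noncomputable def FF (n m : ℕ) : MvPolynomial (ℕ ⊕ ℕ) ℚ :=
  (∏ i ∈ Finset.range m, xVar i) * (∏ i ∈ Finset.Ico n (n + m), yVar i) +
  (∏ i ∈ Finset.range m, yVar i) * (∏ i ∈ Finset.Ico n (n + m), xVar i)

noncomputable def GG (n m : ℕ) : MvPolynomial (ℕ ⊕ ℕ) ℚ :=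
  (∏ i ∈ Finset.range m, xVar i) * (∏ i ∈ Finset.Ico n (n + m), yVar i) -
  (∏ i ∈ Finset.range m, yVar i) * (∏ i ∈ Finset.Ico n (n + m), xVar i)

lemma F_succ (n m : ℕ) : (2 : MvPolynomial (ℕ ⊕ ℕ) ℚ) * FF n (m + 1)
    = (xVar m * yVar (n + m) + xVar (n + m) * yVar m) * FF n m
      + dd m (n + m) * GG n m := by
  unfold FF GG dd
  rw [← add_assoc, prod_range_succ (f := xVar), prod_range_succ (f := yVar),
    Finset.prod_Ico_succ_top (Nat.le_add_right n m) xVar,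
    Finset.prod_Ico_succ_top (Nat.le_add_right n m) yVar]
  ring

lemma G_succ (n m : ℕ) : (2 : MvPolynomial (ℕ ⊕ ℕ) ℚ) * GG n (m + 1)
    = (xVar m * yVar (n + m) + xVar (n + m) * yVar m) * GG n m
      + dd m (n + m) * FF n m := by
  unfold FF GG dd
  rw [← add_assoc, prod_range_succ (f := xVar), prod_range_succ (f := yVar),
    Finset.prod_Ico_succ_top (Nat.le_add_right n m) xVar,
    Finset.prod_Ico_succ_top (Nat.le_add_right n m) yVar]
  ring

lemma two_ne : (2 : MvPolynomial (ℕ ⊕ ℕ) ℚ) ≠ 0 := by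
  exact two_ne_zero

lemma main_ind (n : ℕ) (hn : 1 ≤ n) : ∀ m, 1 ≤ m → m ≤ n →
    FF n m ∈ Subring.closure (gens n) ∧
    ∀ k l : ℕ, m ≤ k → k < n → n + m ≤ l → l < 2 * n →
      ∃ r ∈ Subring.closure (gens n), dd k l * GG n m = 2 * r := by
  intro m hm1
  induction m, hm1 using Nat.le_induction with
  | base =>
    intro _
    constructor
    · have hF1 : FF n 1 = sh 0 n + sh 0 n := by
        unfold FF
        rw [prod_range_one, prod_range_one, Nat.Ico_succ_singleton,
          Finset.prod_singleton, Finset.prod_singleton]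
        linear_combination -(hp 0 n)
      rw [hF1]
      exact add_mem (sh_mem n (by omega) (by omega) (by omega))
        (sh_mem n (by omega) (by omega) (by omega))
    · intro k l hk1 hk2 hl1 hl2
      have hG1 : GG n 1 = dd 0 n := by
        unfold GG dd
        rw [prod_range_one, prod_range_one, Nat.Ico_succ_singleton,
          Finset.prod_singleton, Finset.prod_singleton]
        ring
      refine ⟨2 * (sh k n * sh l 0 - sh k 0 * sh l n), ?_, ?_⟩
      · refine mul_mem ?_ (sub_mem (mul_mem (sh_mem n (by omega) (by omega) (by omega))
            (sh_mem n (by omega) (by omega) (by omega)))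
            (mul_mem (sh_mem n (by omega) (by omega) (by omega))
            (sh_mem n (by omega) (by omega) (by omega))))
        exact_mod_cast natCast_mem (Subring.closure (gens n)) 2
      · rw [hG1]; exact dd_mul k l 0 n
  | succ m hm1' IH =>
    intro hmn
    have hmn' : m ≤ n := le_of_lt (lt_of_lt_of_le (Nat.lt_succ_self m) hmn)
    obtain ⟨hF, hG⟩ := IH hmn'
    have hmltn : m < n := lt_of_lt_of_le (Nat.lt_succ_self m) hmn
    constructor
    · obtain ⟨r, hr, hdg⟩ := hG m (n + m) le_rfl hmltn le_rfl (by omega)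
      have h2 : (2 : MvPolynomial (ℕ ⊕ ℕ) ℚ) * FF n (m + 1)
          = 2 * (sh m (n + m) * FF n m + r) := by
        rw [F_succ, hdg]
        linear_combination (-(FF n m)) * hp m (n + m)
      have := mul_left_cancel₀ two_ne h2
      rw [this]
      exact add_mem (mul_mem (sh_mem n (by omega) (by omega) (by omega)) hF) hr
    · intro k l hk1 hk2 hl1 hl2
      obtain ⟨r1, hr1, hd1⟩ := hG k l (by omega) hk2 (by omega) hl2
      refine ⟨sh m (n + m) * r1
        + (sh k (n + m) * sh l m - sh k m * sh l (n + m)) * FF n m, ?_, ?_⟩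
      · exact add_mem (mul_mem (sh_mem n (by omega) (by omega) (by omega)) hr1)
          (mul_mem (sub_mem
            (mul_mem (sh_mem n (by omega) (by omega) (by omega))
              (sh_mem n (by omega) (by omega) (by omega)))
            (mul_mem (sh_mem n (by omega) (by omega) (by omega))
              (sh_mem n (by omega) (by omega) (by omega)))) hF)
      · have key : (2 : MvPolynomial (ℕ ⊕ ℕ) ℚ) * (dd k l * GG n (m + 1))
            = 2 * (2 * (sh m (n + m) * r1
              + (sh k (n + m) * sh l m - sh k m * sh l (n + m)) * FF n m)) := by
          linear_combination (dd k l) * G_succ n m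
            + (xVar m * yVar (n + m) + xVar (n + m) * yVar m) * hd1
            + (FF n m) * dd_mul k l m (n + m)
            + (-(2 * r1)) * hp m (n + m)
        exact mul_left_cancel₀ two_ne key

theorem statement0 (n : ℕ) (hn : 1 ≤ n) :
    (∏ i ∈ Finset.range n, xVar i) * (∏ i ∈ Finset.Ico n (2 * n), yVar i) +
      (∏ i ∈ Finset.range n, yVar i) * (∏ i ∈ Finset.Ico n (2 * n), xVar i) ∈
    Subring.closure
      ({p : MvPolynomial (ℕ ⊕ ℕ) ℚ | ∃ i j : ℕ, i < j ∧ j < 2 * n ∧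
          p = C (-(1 / 2) : ℚ) * ((xVar i - xVar j) * (yVar i - yVar j))} ∪
       {p : MvPolynomial (ℕ ⊕ ℕ) ℚ | ∃ i : ℕ, i < 2 * n ∧
          p = C (-(1 / 2) : ℚ) * (xVar i * yVar i)}) := by
  have h := (main_ind n hn n hn le_rfl).1
  unfold FF at h
  rw [← two_mul] at h
  exact h
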